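/- The IP equation of state satisfies the admissibility conditions: the function h(p,ρ) = 2p/ρ + √(1 + 4(p/ρ)²) on (0,∞)×(0,∞) satisfies, for all p, ρ > 0: (heq1) h(p,ρ) ≥ √(1 + p²/ρ²) + p/ρ, and (heq2) h(p,ρ)·(1/ρ − ∂h/∂p(p,ρ)) < ∂h/∂ρ(p,ρ) < 0. -/

import Mathlib

/-!
With `x = p / ρ` and `g x = 2x + √(1 + 4x²)`, the IP equation of state is `g (p / ρ)`; hence
`∂h/∂p = g' x / ρ` and `∂h/∂ρ = -x g' x / ρ`, and after multiplying by `ρ` condition (heq2) reads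
`g (1 - g') < -x g' < 0`. With `s = √(1 + 4x²)` the gap `-x g' - g (1 - g')` is
`4x + s + 4x² / s > 0`, while (heq1) only needs `√(1 + x²) ≤ s` and `x ≥ 0`.
-/

noncomputable section

/-- The IP EOS `h(p,ρ) = 2p/ρ + √(1 + 4(p/ρ)²)`. -/
def hIP (p ρ : ℝ) : ℝ := 2 * p / ρ + Real.sqrt (1 + 4 * (p / ρ) ^ 2)

open Real

theorem HasDerivAt.comp_div_const {f : ℝ → ℝ} {f' p ρ : ℝ} (hf : HasDerivAt f f' (p / ρ)) :
    HasDerivAt (fun q => f (q / ρ)) (f' / ρ) p := by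
  simpa [Function.comp_def, div_eq_mul_inv] using hf.comp p ((hasDerivAt_id p).div_const ρ)

theorem HasDerivAt.comp_const_div {f : ℝ → ℝ} {f' p ρ : ℝ} (hρ : ρ ≠ 0)
    (hf : HasDerivAt f f' (p / ρ)) :
    HasDerivAt (fun r => f (p / r)) (-(p / ρ) * f' / ρ) ρ := by
  have hdiv : HasDerivAt (fun r => p / r) (-(p / ρ) / ρ) ρ := by
    simpa only [div_eq_mul_inv, mul_neg, neg_mul, mul_inv, sq, mul_assoc] using
      (hasDerivAt_inv hρ).const_mul p
  exact (hf.comp ρ hdiv).congr_deriv (by ring)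

def ipProfile (x : ℝ) : ℝ := 2 * x + √(1 + 4 * x ^ 2)

def ipProfileDeriv (x : ℝ) : ℝ := 2 + 4 * x / √(1 + 4 * x ^ 2)

theorem hIP_eq_ipProfile (p ρ : ℝ) : hIP p ρ = ipProfile (p / ρ) := by
  simp only [hIP, ipProfile, mul_div_assoc]

theorem one_le_sqrt_one_add_four_mul_sq (x : ℝ) : 1 ≤ √(1 + 4 * x ^ 2) :=
  one_le_sqrt.mpr (by nlinarith [sq_nonneg x])

theorem hasDerivAt_ipProfile (x : ℝ) : HasDerivAt ipProfile (ipProfileDeriv x) x := by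
  have hsq : HasDerivAt (fun y => 1 + 4 * y ^ 2) (4 * (2 * x)) x := by
    simpa using ((hasDerivAt_pow 2 x).const_mul 4).const_add 1
  refine (((hasDerivAt_id x).const_mul 2).add (hsq.sqrt (by positivity))).congr_deriv ?_
  unfold ipProfileDeriv
  field_simp

theorem ipProfileDeriv_pos {x : ℝ} (hx : 0 ≤ x) : 0 < ipProfileDeriv x := by
  unfold ipProfileDeriv
  positivity

theorem sqrt_one_add_sq_add_le_ipProfile {x : ℝ} (hx : 0 ≤ x) : √(1 + x ^ 2) + x ≤ ipProfile x := by
  have hsqrt : √(1 + x ^ 2) ≤ √(1 + 4 * x ^ 2) := sqrt_le_sqrt (by nlinarith [sq_nonneg x])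
  unfold ipProfile
  linarith

theorem ipProfile_mul_one_sub_deriv_lt {x : ℝ} (hx : 0 < x) :
    ipProfile x * (1 - ipProfileDeriv x) < -(x * ipProfileDeriv x) := by
  unfold ipProfile ipProfileDeriv
  set s := √(1 + 4 * x ^ 2)
  have hs : 1 ≤ s := one_le_sqrt_one_add_four_mul_sq x
  have hexpand : -(x * (2 + 4 * x / s)) - (2 * x + s) * (1 - (2 + 4 * x / s))
      = 4 * x + s + 4 * x ^ 2 / s := by
    field_simp
    ring
  have : 0 < 4 * x + s + 4 * x ^ 2 / s := by positivity
  linarith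

/-- The IP EOS satisfies (heq1) and (heq2). -/
theorem ipEOS_admissible (p ρ : ℝ) (hp : 0 < p) (hρ : 0 < ρ) :
    Real.sqrt (1 + p ^ 2 / ρ ^ 2) + p / ρ ≤ hIP p ρ ∧
    hIP p ρ * (1 / ρ - deriv (fun p' => hIP p' ρ) p) < deriv (fun ρ' => hIP p ρ') ρ ∧
    deriv (fun ρ' => hIP p ρ') ρ < 0 := by
  set x := p / ρ
  have hx : 0 < x := div_pos hp hρ
  have hg := hasDerivAt_ipProfile x
  have hdp : deriv (fun p' => hIP p' ρ) p = ipProfileDeriv x / ρ := by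
    simpa only [hIP_eq_ipProfile] using hg.comp_div_const.deriv
  have hdρ : deriv (fun ρ' => hIP p ρ') ρ = -(x * ipProfileDeriv x) / ρ := by
    simpa only [hIP_eq_ipProfile, neg_mul] using (hg.comp_const_div hρ.ne').deriv
  rw [hdp, hdρ, hIP_eq_ipProfile, ← div_pow, ← sub_div, mul_div_assoc']
  refine ⟨sqrt_one_add_sq_add_le_ipProfile hx.le, ?_, ?_⟩
  · exact div_lt_div_of_pos_right (ipProfile_mul_one_sub_deriv_lt hx) hρ
  · exact div_neg_of_neg_of_pos (neg_neg_of_pos (mul_pos hx (ipProfileDeriv_pos hx.le))) hρ
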